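/- arXiv:2410.02617 — 3 statements merged into one kernel-verified Lean document; each statement's English description precedes it below -/
import Mathlib

section
/- Let A and B be tadpole matrices with heads D_A C^k and D_B C^ℓ and tail parameters (a_j), (b_j) respectively. Then AB is a tadpole matrix with head D_{AB} C^r where D_{AB} = D_A (C^k D_B C^{−k}), r ≡ k + ℓ (mod p), and tail parameters c_j ≡ a_j + b_j + j (mod p) when k + ℓ ≥ p (and c_j ≡ a_j + b_j (mod p) when k + ℓ < p). -/
open Matrix

/-- The `p × p` cyclic permutation matrix. -/
def cycleMatrix (p : ℕ) : Matrix (Fin p) (Fin p) ℂ :=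
  Matrix.of fun i j => if (j : ℕ) = ((i : ℕ) + 1) % p then 1 else 0

/-- The fixed primitive `p²`-th root of unity `ξ = e^{2πi/p²}`. -/
noncomputable def xi (p : ℕ) : ℂ := Complex.exp (2 * Real.pi * Complex.I / (p ^ 2))

/-- The tadpole matrix with head `D C^k` (where `D = diagonal d`) and tail
`diag(ξ^{0·k + a_0 p}, ξ^{1·k + a_1 p}, …, ξ^{(p-1)k + a_{p-1} p})`.
We index the `2p × 2p` matrix by `Fin p ⊕ Fin p`. -/
noncomputable def tadpole (p : ℕ) (d : Fin p → ℂ) (k : ℕ) (a : Fin p → ℕ) :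
    Matrix (Fin p ⊕ Fin p) (Fin p ⊕ Fin p) ℂ :=
  Matrix.fromBlocks (Matrix.diagonal d * cycleMatrix p ^ k) 0 0
    (Matrix.diagonal fun j : Fin p => xi p ^ ((j : ℕ) * k + a j * p))

/-- Membership in the set `𝒯` of tadpole matrices: `D` is unitary diagonal of
determinant one, `k ∈ {0, …, p-1}`, `a_j ∈ {0, …, p-1}` and `a_0 = 0` (so the first
tail entry is `1`). -/
def IsTadpole (p : ℕ) (A : Matrix (Fin p ⊕ Fin p) (Fin p ⊕ Fin p) ℂ) : Prop :=
  ∃ (d : Fin p → ℂ) (k : ℕ) (a : Fin p → ℕ),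
    (∀ i, ‖d i‖ = 1) ∧ (∏ i, d i = 1) ∧ k < p ∧ (∀ j, a j < p) ∧
    (∀ j : Fin p, (j : ℕ) = 0 → a j = 0) ∧ A = tadpole p d k a

/-! Both blocks multiply independently. In the head, `C^{p-k} C^{(k+ℓ) mod p} = C^ℓ` because
`C^p = 1`. In the tail, the exponents of `ξ` add up to `j(k+ℓ) + (a_j+b_j)p`; writing
`k + ℓ = r + p` when there is a carry turns `jp` into an extra summand `j` of the tail
parameter, and reducing that parameter mod `p` changes the exponent only by a multiple of `p²`,
the order of `ξ`. -/

section CycleMatrix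

lemma cycleMatrix_pow_apply {p : ℕ} (m : ℕ) (i j : Fin p) :
    (cycleMatrix p ^ m) i j = if (j : ℕ) = ((i : ℕ) + m) % p then 1 else 0 := by
  have hp : 0 < p := i.pos
  induction m generalizing j with
  | zero => simp [Matrix.one_apply, Nat.mod_eq_of_lt i.isLt, Fin.ext_iff, eq_comm]
  | succ m ih =>
    let next : Fin p := ⟨((i : ℕ) + m) % p, Nat.mod_lt _ hp⟩
    rw [pow_succ, Matrix.mul_apply, Finset.sum_eq_single next]
    · simp only [ih]
      simp [next, cycleMatrix, Nat.mod_add_mod, add_assoc]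
    · intro t _ ht
      have : (t : ℕ) ≠ ((i : ℕ) + m) % p := fun h => ht (Fin.ext h)
      simp [ih, this]
    · simp

lemma cycleMatrix_pow_self (p : ℕ) : cycleMatrix p ^ p = 1 := by
  ext i j
  simp [cycleMatrix_pow_apply, Matrix.one_apply, Nat.mod_eq_of_lt i.isLt, Fin.ext_iff, eq_comm]

lemma cycleMatrix_pow_mod (p m : ℕ) : cycleMatrix p ^ (m % p) = cycleMatrix p ^ m :=
  pow_eq_pow_of_modEq (Nat.mod_modEq m p) (cycleMatrix_pow_self p)

lemma cycleMatrix_pow_sub_mul_pow_add_mod {p k : ℕ} (hk : k ≤ p) (ℓ : ℕ) :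
    cycleMatrix p ^ (p - k) * cycleMatrix p ^ ((k + ℓ) % p) = cycleMatrix p ^ ℓ := by
  rw [← pow_add, ← cycleMatrix_pow_mod, Nat.add_mod_mod, show p - k + (k + ℓ) = p + ℓ by omega,
    Nat.add_mod_left, cycleMatrix_pow_mod]

end CycleMatrix

section Xi

lemma xi_pow_sq (p : ℕ) : xi p ^ (p ^ 2) = 1 := by
  rcases eq_or_ne p 0 with rfl | hp
  · simp
  · have := Complex.isPrimitiveRoot_exp (p ^ 2) (pow_ne_zero 2 hp)
    push_cast at this
    exact this.pow_eq_one

lemma xi_pow_eq_of_modEq {p m n : ℕ} (h : m ≡ n [MOD p ^ 2]) : xi p ^ m = xi p ^ n :=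
  pow_eq_pow_of_modEq h (xi_pow_sq p)

end Xi

lemma Nat.mod_mul_self_modEq (c p : ℕ) : c % p * p ≡ c * p [MOD p ^ 2] := by
  rw [sq, ← Nat.mul_mod_mul_right]
  exact Nat.mod_modEq _ _

lemma add_eq_add_mod_add_carry {p k ℓ : ℕ} (hk : k < p) (hl : ℓ < p) :
    k + ℓ = (k + ℓ) % p + if p ≤ k + ℓ then p else 0 := by
  split_ifs with h
  · rw [Nat.mod_eq_sub_mod h, Nat.mod_eq_of_lt (by omega)]
    omega
  · rw [Nat.mod_eq_of_lt (by omega), add_zero]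

lemma tadpole_tail_exponent_modEq {p k ℓ : ℕ} (hk : k < p) (hl : ℓ < p) (j a b : ℕ) :
    j * k + a * p + (j * ℓ + b * p) ≡
      j * ((k + ℓ) % p) + ((a + b + if p ≤ k + ℓ then j else 0) % p) * p [MOD p ^ 2] := by
  calc j * k + a * p + (j * ℓ + b * p) = j * (k + ℓ) + (a + b) * p := by ring
    _ = j * ((k + ℓ) % p) + (a + b + if p ≤ k + ℓ then j else 0) * p := by
      conv_lhs => rw [add_eq_add_mod_add_carry hk hl]
      split_ifs <;> ring
    _ ≡ _ [MOD p ^ 2] := Nat.ModEq.add_left _ (Nat.mod_mul_self_modEq _ _).symm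

theorem tadpole_mul_formula_general (p : ℕ)
    (dA dB : Fin p → ℂ) (k ℓ : ℕ) (a b : Fin p → ℕ)
    (hk : k < p)
    (hl : ℓ < p) :
    tadpole p dA k a * tadpole p dB ℓ b =
      Matrix.fromBlocks
        ((Matrix.diagonal dA * (cycleMatrix p ^ k * Matrix.diagonal dB * cycleMatrix p ^ (p - k)))
          * cycleMatrix p ^ ((k + ℓ) % p)) 0 0
        (Matrix.diagonal fun j : Fin p =>
          xi p ^ ((j : ℕ) * ((k + ℓ) % p) +
            ((a j + b j + if p ≤ k + ℓ then (j : ℕ) else 0) % p) * p)) := by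
  have head : Matrix.diagonal dA * (cycleMatrix p ^ k * Matrix.diagonal dB *
      cycleMatrix p ^ (p - k)) * cycleMatrix p ^ ((k + ℓ) % p) =
      Matrix.diagonal dA * cycleMatrix p ^ k * (Matrix.diagonal dB * cycleMatrix p ^ ℓ) := by
    simp only [mul_assoc, cycleMatrix_pow_sub_mul_pow_add_mod hk.le]
  have tail : ∀ j : Fin p, xi p ^ ((j : ℕ) * k + a j * p) * xi p ^ ((j : ℕ) * ℓ + b j * p) =
      xi p ^ ((j : ℕ) * ((k + ℓ) % p) +
        ((a j + b j + if p ≤ k + ℓ then (j : ℕ) else 0) % p) * p) := fun j => by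
    rw [← pow_add]
    exact xi_pow_eq_of_modEq (tadpole_tail_exponent_modEq hk hl _ _ _)
  simp [tadpole, Matrix.fromBlocks_multiply, Matrix.diagonal_mul_diagonal, head, tail]

/-- Product formula for tadpole matrices: if `A` has head `D_A C^k` and tail parameters
`(a_j)` and `B` has head `D_B C^ℓ` and tail parameters `(b_j)`, then `A * B` is the
tadpole matrix with head `D_{AB} C^r`, where `D_{AB} = D_A (C^k D_B C^{-k})`
(here `C^{-k} = C^{p-k}` since `C^p = 1`), `r ≡ k + ℓ (mod p)`, and tail parameters
`c_j ≡ a_j + b_j + j (mod p)` if `k + ℓ ≥ p`, and `c_j ≡ a_j + b_j (mod p)` otherwise. -/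
theorem tadpole_mul_formula (p : ℕ) (hp : p.Prime) (hodd : Odd p)
    (dA dB : Fin p → ℂ) (k ℓ : ℕ) (a b : Fin p → ℕ)
    (hdA : ∀ i, ‖dA i‖ = 1) (hdetA : ∏ i, dA i = 1) (hk : k < p)
    (ha : ∀ j, a j < p) (ha0 : ∀ j : Fin p, (j : ℕ) = 0 → a j = 0)
    (hdB : ∀ i, ‖dB i‖ = 1) (hdetB : ∏ i, dB i = 1) (hl : ℓ < p)
    (hb : ∀ j, b j < p) (hb0 : ∀ j : Fin p, (j : ℕ) = 0 → b j = 0) :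
    tadpole p dA k a * tadpole p dB ℓ b =
      Matrix.fromBlocks
        ((Matrix.diagonal dA * (cycleMatrix p ^ k * Matrix.diagonal dB * cycleMatrix p ^ (p - k)))
          * cycleMatrix p ^ ((k + ℓ) % p)) 0 0
        (Matrix.diagonal fun j : Fin p =>
          xi p ^ ((j : ℕ) * ((k + ℓ) % p) +
            ((a j + b j + if p ≤ k + ℓ then (j : ℕ) else 0) % p) * p)) :=
  tadpole_mul_formula_general p dA dB k ℓ a b hk hl
end

section
/- Let A, B be tadpole matrices with head parameters k, ℓ ∈ {1,…,p−1} satisfying k + ℓ ≢ 0 (mod p) (so that none of A, B, AB is diagonal). Then σ(AB) ⊆ σ(A)·σ(B). -/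
/-!
The head `D Cᵏ` of a tadpole matrix is `diagonal d` times the shift by `k`, a generator of
`Fin p`. Iterating the eigenvalue equation `d i * v (i + k) = μ * v i` once around the orbit of
an index with `v i ≠ 0` gives `μ ^ p = ∏ d = 1`. Conversely, twisting an eigenvector by a
character `χ` of `Fin p` with `χ k = ω` multiplies its eigenvalue by `ω`; so the spectrum of
the head is exactly the set of `p`-th roots of unity.

`AB` is again block diagonal, with head `diagonal d' C^(k+ℓ)` where `∏ d' = 1` and
`p ∤ k + ℓ`, and with tail the product of the tails. An eigenvalue `μ` of the head of `AB` is a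
`p`-th root of unity, hence an eigenvalue of the head of `A`, and `μ = μ * 1` where `1` is the
first tail entry of `B`. An eigenvalue of the tail of `AB` is `t_A j * t_B j`.
-/

open Matrix

open Finset
open Fin.NatCast

lemma Matrix.mem_spectrum_iff_exists_mulVec_eq_smul {n K : Type*} [Fintype n] [DecidableEq n]
    [Field K] {M : Matrix n n K} {μ : K} :
    μ ∈ spectrum K M ↔ ∃ v ≠ 0, M *ᵥ v = μ • v := by
  rw [← spectrum_toLin', ← Module.End.hasEigenvalue_iff_mem_spectrum,
    Module.End.hasEigenvalue_iff, Submodule.ne_bot_iff]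
  simp only [Module.End.mem_genEigenspace_one, toLin'_apply, ne_eq, and_comm]

lemma spectrum_fromBlocks_zero {m n R : Type*} [Fintype m] [Fintype n] [DecidableEq m]
    [DecidableEq n] [CommRing R] (A : Matrix m m R) (D : Matrix n n R) :
    spectrum R (fromBlocks A 0 0 D) = spectrum R A ∪ spectrum R D := by
  ext μ
  have hsub : algebraMap R _ μ - fromBlocks A 0 0 D =
      fromBlocks (algebraMap R _ μ - A) 0 0 (algebraMap R _ μ - D) := by
    ext (i | i) (j | j) <;> simp [algebraMap_matrix_apply]
  simp only [spectrum.mem_iff, Set.mem_union, hsub, isUnit_fromBlocks_zero₂₁, not_and_or]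

lemma prod_range_mul_eq_pow_mul {G M : Type*} [AddMonoid G] [CommMonoid M] {d v : G → M}
    {g : G} {μ : M} (h : ∀ i, d i * v (i + g) = μ * v i) (i : G) (n : ℕ) :
    (∏ j ∈ range n, d (i + j • g)) * v (i + n • g) = μ ^ n * v i := by
  induction n with
  | zero => simp
  | succ n ih =>
    rw [prod_range_succ, succ_nsmul, ← add_assoc, mul_assoc, h, mul_left_comm, ih, pow_succ]
    ac_rfl

section Shift

variable {G : Type*} [AddMonoid G] [DecidableEq G]

def shiftMatrix (R : Type*) [Zero R] [One R] (g : G) : Matrix G G R :=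
  of fun i j => if j = i + g then 1 else 0

variable [Fintype G] {R : Type*} [CommSemiring R]

lemma shiftMatrix_mulVec (g : G) (v : G → R) : shiftMatrix R g *ᵥ v = fun i => v (i + g) := by
  ext i
  simp [shiftMatrix, mulVec, dotProduct]

lemma shiftMatrix_pow (g : G) (n : ℕ) : shiftMatrix R g ^ n = shiftMatrix R (n • g) := by
  refine ext_iff_mulVec.mpr fun v => ?_
  induction n generalizing v with
  | zero => simp [shiftMatrix_mulVec]
  | succ n ih => simp [pow_succ, ← mulVec_mulVec, shiftMatrix_mulVec, ih, succ_nsmul, add_assoc]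

lemma diagonal_mul_shiftMatrix_mulVec (d : G → R) (g : G) (v : G → R) :
    (diagonal d * shiftMatrix R g) *ᵥ v = fun i => d i * v (i + g) := by
  ext i
  rw [← mulVec_mulVec, shiftMatrix_mulVec, mulVec_diagonal]

lemma diagonal_mul_shiftMatrix_mulVec_eq_smul_iff {d v : G → R} {g : G} {μ : R} :
    (diagonal d * shiftMatrix R g) *ᵥ v = μ • v ↔ ∀ i, d i * v (i + g) = μ * v i := by
  rw [diagonal_mul_shiftMatrix_mulVec, funext_iff]
  rfl

lemma diagonal_mul_shiftMatrix_mul_diagonal_mul_shiftMatrix (d e : G → R) (g h : G) :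
    diagonal d * shiftMatrix R g * (diagonal e * shiftMatrix R h) =
      diagonal (fun i => d i * e (i + g)) * shiftMatrix R (g + h) := by
  refine ext_iff_mulVec.mpr fun v => ?_
  rw [← mulVec_mulVec]
  simp only [diagonal_mul_shiftMatrix_mulVec, mul_assoc, add_assoc]

end Shift

section Generator

variable {G : Type*} [AddGroup G] [Fintype G] [DecidableEq G] {g : G} {K : Type*} [Field K]

lemma prod_range_card_add_nsmul (hg : ∀ x, x ∈ AddSubgroup.zmultiples g) {M : Type*}
    [CommMonoid M] (d : G → M) (i : G) :
    ∏ j ∈ range (Nat.card G), d (i + j • g) = ∏ x, d x := by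
  have hinj : Set.InjOn (fun j : ℕ => i + j • g) (range (Nat.card G)) := fun a ha b hb hab => by
    rw [← addOrderOf_eq_card_of_forall_mem_zmultiples hg] at ha hb
    exact nsmul_injOn_Iio_addOrderOf (by simpa using ha) (by simpa using hb) (add_left_cancel hab)
  have himage : (range (Nat.card G)).image (fun j => i + j • g) = univ := by
    refine eq_univ_of_card _ ?_
    rw [card_image_of_injOn hinj, card_range, Nat.card_eq_fintype_card]
  rw [← himage, prod_image hinj]

lemma pow_card_eq_prod_of_mem_spectrum (hg : ∀ x, x ∈ AddSubgroup.zmultiples g) {d : G → K}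
    {μ : K} (hμ : μ ∈ spectrum K (diagonal d * shiftMatrix K g)) :
    μ ^ Nat.card G = ∏ i, d i := by
  obtain ⟨v, hv0, hv⟩ := mem_spectrum_iff_exists_mulVec_eq_smul.mp hμ
  rw [diagonal_mul_shiftMatrix_mulVec_eq_smul_iff] at hv
  obtain ⟨i, hi⟩ := Function.ne_iff.mp hv0
  have horbit := prod_range_mul_eq_pow_mul hv i (Nat.card G)
  rw [prod_range_card_add_nsmul hg, ← addOrderOf_eq_card_of_forall_mem_zmultiples hg,
    addOrderOf_nsmul_eq_zero, add_zero] at horbit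
  rw [← addOrderOf_eq_card_of_forall_mem_zmultiples hg]
  exact (mul_right_cancel₀ hi horbit).symm

lemma mul_mem_spectrum_of_pow_card_eq_one (hg : ∀ x, x ∈ AddSubgroup.zmultiples g)
    {d : G → K} {μ ω : K} (hμ : μ ∈ spectrum K (diagonal d * shiftMatrix K g))
    (hω : ω ^ Nat.card G = 1) : ω * μ ∈ spectrum K (diagonal d * shiftMatrix K g) := by
  obtain ⟨v, hv0, hv⟩ := mem_spectrum_iff_exists_mulVec_eq_smul.mp hμ
  rw [diagonal_mul_shiftMatrix_mulVec_eq_smul_iff] at hv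
  have hω0 : ω ≠ 0 := ne_zero_pow (Nat.card_pos (α := G)).ne' (by rw [hω]; exact one_ne_zero)
  have hord : addOrderOf (Additive.ofMul (Units.mk0 ω hω0)) ∣ addOrderOf g := by
    rw [addOrderOf_ofMul_eq_orderOf, ← orderOf_units, Units.val_mk0,
      addOrderOf_eq_card_of_forall_mem_zmultiples hg]
    exact orderOf_dvd_of_pow_eq_one hω
  set χ := addMonoidHomOfForallMemZMultiples hg hord
  set z : G → K := fun x => ((χ x).toMul : Kˣ)
  have hz : ∀ x, z (x + g) = ω * z x := fun x => by
    simp [z, χ, map_add, addMonoidHomOfForallMemZMultiples_apply_gen, mul_comm]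
  refine mem_spectrum_iff_exists_mulVec_eq_smul.mpr ⟨fun x => z x * v x, ?_, ?_⟩
  · exact fun h => hv0 <| funext fun x =>
      (mul_eq_zero.mp (congrFun h x)).resolve_left (Units.ne_zero _)
  · rw [diagonal_mul_shiftMatrix_mulVec_eq_smul_iff]
    intro i
    rw [hz]
    linear_combination ω * z i * hv i

theorem spectrum_diagonal_mul_shiftMatrix [IsAlgClosed K]
    (hg : ∀ x, x ∈ AddSubgroup.zmultiples g) {d : G → K} (hd : ∏ i, d i ≠ 0) :
    spectrum K (diagonal d * shiftMatrix K g) = {μ | μ ^ Nat.card G = ∏ i, d i} := by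
  refine Set.Subset.antisymm (fun μ => pow_card_eq_prod_of_mem_spectrum hg) fun μ hμ => ?_
  obtain ⟨μ₀, hμ₀⟩ := spectrum.nonempty_of_isAlgClosed_of_finiteDimensional K
    (diagonal d * shiftMatrix K g)
  have hpow₀ := pow_card_eq_prod_of_mem_spectrum hg hμ₀
  have hμ₀_ne : μ₀ ≠ 0 := ne_zero_pow (Nat.card_pos (α := G)).ne' (hpow₀ ▸ hd)
  have hrot := mul_mem_spectrum_of_pow_card_eq_one hg hμ₀ (ω := μ / μ₀)
    (by rw [div_pow, hμ, hpow₀, div_self hd])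
  rwa [div_mul_cancel₀ _ hμ₀_ne] at hrot

end Generator

section Tadpole

variable {p : ℕ} [NeZero p]

lemma cycleMatrix_pow (m : ℕ) : cycleMatrix p ^ m = shiftMatrix ℂ (m : Fin p) := by
  have hcycle : cycleMatrix p = shiftMatrix ℂ 1 := by
    ext i j
    simp [cycleMatrix, shiftMatrix, Fin.ext_iff, Fin.val_add]
  rw [hcycle, shiftMatrix_pow, nsmul_one]

lemma tadpole_eq_fromBlocks (d : Fin p → ℂ) (k : ℕ) (a : Fin p → ℕ) :
    tadpole p d k a = fromBlocks (diagonal d * shiftMatrix ℂ (k : Fin p)) 0 0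
      (diagonal fun j : Fin p => xi p ^ ((j : ℕ) * k + a j * p)) := by
  rw [tadpole, cycleMatrix_pow]

lemma spectrum_tadpole (d : Fin p → ℂ) (k : ℕ) (a : Fin p → ℕ) :
    spectrum ℂ (tadpole p d k a) = spectrum ℂ (diagonal d * shiftMatrix ℂ (k : Fin p)) ∪
      Set.range fun j : Fin p => xi p ^ ((j : ℕ) * k + a j * p) := by
  rw [tadpole_eq_fromBlocks, spectrum_fromBlocks_zero, spectrum_diagonal]

lemma xi_pow_mem_spectrum_tadpole (d : Fin p → ℂ) (k : ℕ) (a : Fin p → ℕ) (j : Fin p) :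
    xi p ^ ((j : ℕ) * k + a j * p) ∈ spectrum ℂ (tadpole p d k a) := by
  rw [spectrum_tadpole]
  exact Or.inr ⟨j, rfl⟩

lemma tadpole_mul_tadpole (dA dB : Fin p → ℂ) (k ℓ : ℕ) (a b : Fin p → ℕ) :
    tadpole p dA k a * tadpole p dB ℓ b =
      fromBlocks (diagonal (fun i => dA i * dB (i + k)) * shiftMatrix ℂ ((k + ℓ : ℕ) : Fin p))
        0 0 (diagonal fun j : Fin p =>
          xi p ^ ((j : ℕ) * k + a j * p) * xi p ^ ((j : ℕ) * ℓ + b j * p)) := by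
  rw [tadpole_eq_fromBlocks, tadpole_eq_fromBlocks, fromBlocks_multiply,
    diagonal_mul_shiftMatrix_mul_diagonal_mul_shiftMatrix, diagonal_mul_diagonal, Nat.cast_add]
  simp

lemma mem_zmultiples_natCast_of_not_dvd (hp : p.Prime) {m : ℕ} (hm : ¬ p ∣ m) (x : Fin p) :
    x ∈ AddSubgroup.zmultiples (m : Fin p) :=
  haveI := Fact.mk hp
  mem_zmultiples_of_prime_card (Nat.card_fin p) (Fin.natCast_eq_zero.not.mpr hm)

end Tadpole

open Pointwise in
theorem tadpole_spectrum_mul_subset_of_nondiagonal_general (p : ℕ) (hp : p.Prime)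
    (dA dB : Fin p → ℂ) (k ℓ : ℕ) (a b : Fin p → ℕ)
    (hdetA : ∏ i, dA i = 1)
    (hk1 : 1 ≤ k) (hk2 : k ≤ p - 1)
    (hdetB : ∏ i, dB i = 1)
    (hb0 : ∀ j : Fin p, (j : ℕ) = 0 → b j = 0)
    (hkl : (k + ℓ) % p ≠ 0) :
    spectrum ℂ (tadpole p dA k a * tadpole p dB ℓ b) ⊆
      spectrum ℂ (tadpole p dA k a) * spectrum ℂ (tadpole p dB ℓ b) := by
  have : NeZero p := ⟨hp.ne_zero⟩
  have hk : ¬ p ∣ k := Nat.not_dvd_of_pos_of_lt hk1 (by omega)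
  have hshift : ∏ i, dB (i + k) = ∏ i, dB i := 
    Fintype.prod_equiv (.addRight (k : Fin p)) _ _ fun _ => rfl
  have hdet : ∏ i, dA i * dB (i + k) = 1 := by
    rw [prod_mul_distrib, hshift, hdetA, hdetB, one_mul]
  have hspecA := spectrum_diagonal_mul_shiftMatrix (mem_zmultiples_natCast_of_not_dvd hp hk)
    (d := dA) (by simp [hdetA])
  have hspecAB := spectrum_diagonal_mul_shiftMatrix
    (mem_zmultiples_natCast_of_not_dvd hp (Nat.dvd_iff_mod_eq_zero.not.mpr hkl))
    (d := fun i => dA i * dB (i + k)) (by simp [hdet])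
  intro μ hμ
  rw [tadpole_mul_tadpole, spectrum_fromBlocks_zero, spectrum_diagonal, hspecAB] at hμ
  rcases hμ with hhead | ⟨j, rfl⟩
  · refine Set.mem_mul.mpr ⟨μ, ?_, 1, ?_, mul_one μ⟩
    · rw [spectrum_tadpole, hspecA]
      exact Or.inl (hhead.trans (hdet.trans hdetA.symm))
    · simpa [hb0 0 rfl] using xi_pow_mem_spectrum_tadpole dB ℓ b 0
  · exact Set.mul_mem_mul (xi_pow_mem_spectrum_tadpole dA k a j)
      (xi_pow_mem_spectrum_tadpole dB ℓ b j)

open Pointwise in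
/-- If `A`, `B` are tadpole matrices with head parameters `k, ℓ ∈ {1, …, p-1}` such
that `k + ℓ ≢ 0 (mod p)` (so none of `A`, `B`, `AB` is diagonal), then every
eigenvalue of `AB` is the product of an eigenvalue of `A` and an eigenvalue of `B`. -/
theorem tadpole_spectrum_mul_subset_of_nondiagonal (p : ℕ) (hp : p.Prime) (hodd : Odd p)
    (dA dB : Fin p → ℂ) (k ℓ : ℕ) (a b : Fin p → ℕ)
    (hdA : ∀ i, ‖dA i‖ = 1) (hdetA : ∏ i, dA i = 1)
    (hk1 : 1 ≤ k) (hk2 : k ≤ p - 1)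
    (ha : ∀ j, a j < p) (ha0 : ∀ j : Fin p, (j : ℕ) = 0 → a j = 0)
    (hdB : ∀ i, ‖dB i‖ = 1) (hdetB : ∏ i, dB i = 1)
    (hl1 : 1 ≤ ℓ) (hl2 : ℓ ≤ p - 1)
    (hb : ∀ j, b j < p) (hb0 : ∀ j : Fin p, (j : ℕ) = 0 → b j = 0)
    (hkl : (k + ℓ) % p ≠ 0) :
    spectrum ℂ (tadpole p dA k a * tadpole p dB ℓ b) ⊆
      spectrum ℂ (tadpole p dA k a) * spectrum ℂ (tadpole p dB ℓ b) :=
  tadpole_spectrum_mul_subset_of_nondiagonal_general p hp dA dB k ℓ a b hdetA hk1 hk2 hdetB hb0 hkl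
end

section
/- For 0 < r < 1, the semigroup 𝒮_r is (4r²/(1−r²)²)-submultiplicative: for all A, B ∈ 𝒮_r and every eigenvalue γ of AB, there exist eigenvalues α of A and β of B with |γ − αβ| ≤ (4r²/(1−r²)²)·ρ(A)·ρ(B), where ρ denotes spectral radius. -/
/-!
`A = λ·[[1, x*], [y, y x*]]` is the rank-one matrix `λ Y X*` with `X = (1, x)`, `Y = (1, y)`, so its
spectrum is `{0, λ⟪X, Y⟫}`. Likewise `AB = λμ⟪X, Y'⟫ Y X'*` has spectrum `{0, λμ⟪X, Y'⟫⟪X', Y⟫}`,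
and the eigenvalue `γ = λμ⟪X, Y'⟫⟪X', Y⟫` is matched with `αβ = λμ⟪X, Y⟫⟪X', Y'⟫`. The difference
`⟪X, Y⟫⟪X', Y'⟫ - ⟪X, Y'⟫⟪X', Y⟫` is half the inner product of the antisymmetric tensors
`X ⊗ X' - X' ⊗ X` and `Y ⊗ Y' - Y' ⊗ Y`, so Cauchy–Schwarz bounds it by the square roots of the
Gram determinants of `X, X'` and of `Y, Y'`, hence by `(‖x‖ + ‖x'‖)(‖y‖ + ‖y'‖) < 4r²`, while
`|⟪X, Y⟫| = |1 + ⟪x, y⟫| ≥ 1 - r²` and likewise for `X', Y'`.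
-/

open Matrix

/-- The `n × n` matrix `[[1, x*], [y, y x*]]` (with `n = m + 1`, indexed by
`Unit ⊕ Fin m`), where `x* ` denotes the conjugate-transpose row vector. -/
def srMat (m : ℕ) (x y : EuclideanSpace ℂ (Fin m)) :
    Matrix (Unit ⊕ Fin m) (Unit ⊕ Fin m) ℂ :=
  Matrix.fromBlocks 1 (Matrix.of fun _ j => (starRingEnd ℂ) (x j))
    (Matrix.of fun i _ => y i) (Matrix.of fun i j => y i * (starRingEnd ℂ) (x j))

/-- The semigroup `𝒮_r = { λ [[1, x*], [y, y x*]] : ‖x‖, ‖y‖ < r, λ ∈ ℂ }`. -/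
def srSet (m : ℕ) (r : ℝ) : Set (Matrix (Unit ⊕ Fin m) (Unit ⊕ Fin m) ℂ) :=
  {A | ∃ (x y : EuclideanSpace ℂ (Fin m)) (lam : ℂ),
    ‖x‖ < r ∧ ‖y‖ < r ∧ A = lam • srMat m x y}

open scoped InnerProductSpace TensorProduct

section InnerProductSpace

variable {𝕜 E : Type*} [RCLike 𝕜] [NormedAddCommGroup E] [InnerProductSpace 𝕜 E]

theorem inner_tmul_sub_tmul (u u' v v' : E) :
    ⟪u ⊗ₜ[𝕜] u' - u' ⊗ₜ[𝕜] u, v ⊗ₜ[𝕜] v' - v' ⊗ₜ[𝕜] v⟫_𝕜 =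
      2 * (⟪u, v⟫_𝕜 * ⟪u', v'⟫_𝕜 - ⟪u, v'⟫_𝕜 * ⟪u', v⟫_𝕜) := by
  simp only [inner_sub_left, inner_sub_right, TensorProduct.inner_tmul]
  ring

theorem norm_tmul_sub_tmul_sq (u u' : E) :
    ‖u ⊗ₜ[𝕜] u' - u' ⊗ₜ[𝕜] u‖ ^ 2 = 2 * (‖u‖ ^ 2 * ‖u'‖ ^ 2 - ‖⟪u, u'⟫_𝕜‖ ^ 2) := by
  rw [← RCLike.ofReal_inj (K := 𝕜)]
  push_cast
  rw [← inner_self_eq_norm_sq_to_K, inner_tmul_sub_tmul, ← inner_conj_symm u' u, RCLike.mul_conj,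
    inner_self_eq_norm_sq_to_K, inner_self_eq_norm_sq_to_K]

theorem norm_inner_mul_inner_sub_sq_le (u u' v v' : E) :
    ‖⟪u, v⟫_𝕜 * ⟪u', v'⟫_𝕜 - ⟪u, v'⟫_𝕜 * ⟪u', v⟫_𝕜‖ ^ 2 ≤
      (‖u‖ ^ 2 * ‖u'‖ ^ 2 - ‖⟪u, u'⟫_𝕜‖ ^ 2) * (‖v‖ ^ 2 * ‖v'‖ ^ 2 - ‖⟪v, v'⟫_𝕜‖ ^ 2) := by
  have h := pow_le_pow_left₀ (norm_nonneg _)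
    (norm_inner_le_norm (𝕜 := 𝕜) (u ⊗ₜ[𝕜] u' - u' ⊗ₜ[𝕜] u) (v ⊗ₜ[𝕜] v' - v' ⊗ₜ[𝕜] v)) 2
  rw [mul_pow, norm_tmul_sub_tmul_sq, norm_tmul_sub_tmul_sq, inner_tmul_sub_tmul, norm_mul,
    mul_pow, RCLike.norm_two] at h
  linarith

theorem one_sub_mul_le_norm_one_add_inner (x y : E) :
    1 - ‖x‖ * ‖y‖ ≤ ‖(1 : 𝕜) + ⟪x, y⟫_𝕜‖ := by
  have h := norm_sub_norm_le (1 : 𝕜) (-⟪x, y⟫_𝕜)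
  rw [norm_one, norm_neg, sub_neg_eq_add] at h
  linarith [norm_inner_le_norm (𝕜 := 𝕜) x y]

end InnerProductSpace

namespace Matrix

variable {n K : Type*} [Fintype n] [DecidableEq n] [Field K]

theorem mem_spectrum_vecMulVec_iff [Nonempty n] {u v : n → K} {r : K} :
    r ∈ spectrum K (vecMulVec u v) ↔ r ^ (Fintype.card n - 1) * (r - u ⬝ᵥ v) = 0 := by
  rw [mem_spectrum_iff_isRoot_charpoly, charpoly_vecMulVec, Polynomial.IsRoot.def,
    Polynomial.eval_sub, Polynomial.eval_smul, Polynomial.eval_pow, Polynomial.eval_pow,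
    Polynomial.eval_X, smul_eq_mul, mul_sub, ← pow_succ, Nat.sub_add_cancel Fintype.card_pos,
    mul_comm]

theorem dotProduct_mem_spectrum_vecMulVec [Nonempty n] (u v : n → K) :
    u ⬝ᵥ v ∈ spectrum K (vecMulVec u v) := by
  simp [mem_spectrum_vecMulVec_iff]

theorem zero_mem_spectrum_vecMulVec [Nontrivial n] (u v : n → K) :
    0 ∈ spectrum K (vecMulVec u v) := by
  have : Fintype.card n - 1 ≠ 0 := by have := Fintype.one_lt_card (α := n); omega
  simp [mem_spectrum_vecMulVec_iff, this]

theorem eq_zero_or_eq_dotProduct_of_mem_spectrum_vecMulVec {u v : n → K} {r : K}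
    (hr : r ∈ spectrum K (vecMulVec u v)) : r = 0 ∨ r = u ⬝ᵥ v := by
  cases isEmpty_or_nonempty n
  · simp [spectrum.of_subsingleton] at hr
  · rw [mem_spectrum_vecMulVec_iff, mul_eq_zero, sub_eq_zero] at hr
    exact hr.imp_left eq_zero_of_pow_eq_zero

theorem spectralRadius_vecMulVec {𝕜 : Type*} [NormedField 𝕜] [Nonempty n] (u v : n → 𝕜) :
    spectralRadius 𝕜 (vecMulVec u v) = ‖u ⬝ᵥ v‖₊ := by
  refine le_antisymm (iSup₂_le fun r hr => ?_)
    (le_iSup₂_of_le _ (dotProduct_mem_spectrum_vecMulVec u v) le_rfl)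
  rcases eq_zero_or_eq_dotProduct_of_mem_spectrum_vecMulVec hr with rfl | rfl <;> simp

theorem exists_mem_spectrum_vecMulVec_norm_sub_mul_le {𝕜 : Type*} [NormedField 𝕜] [Nontrivial n]
    (u v u' v' : n → 𝕜) {γ : 𝕜} (hγ : γ ∈ spectrum 𝕜 (vecMulVec u v * vecMulVec u' v')) :
    ∃ α ∈ spectrum 𝕜 (vecMulVec u v), ∃ β ∈ spectrum 𝕜 (vecMulVec u' v'),
      ‖γ - α * β‖ ≤ ‖(u ⬝ᵥ v) * (u' ⬝ᵥ v') - (v ⬝ᵥ u') * (u ⬝ᵥ v')‖ := by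
  rw [vecMulVec_mul_vecMulVec] at hγ
  rcases eq_zero_or_eq_dotProduct_of_mem_spectrum_vecMulVec hγ with rfl | rfl
  · exact ⟨0, zero_mem_spectrum_vecMulVec u v, 0, zero_mem_spectrum_vecMulVec u' v',
      by simp only [mul_zero, sub_zero, norm_zero]; positivity⟩
  · refine ⟨_, dotProduct_mem_spectrum_vecMulVec u v, _, dotProduct_mem_spectrum_vecMulVec u' v', ?_⟩
    rw [dotProduct_smul, smul_eq_mul, norm_sub_rev]

end Matrix

section Augment

variable {𝕜 ι : Type*} [RCLike 𝕜] [Fintype ι]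

def augment (x : EuclideanSpace 𝕜 ι) : EuclideanSpace 𝕜 (Unit ⊕ ι) :=
  WithLp.toLp 2 (Sum.elim 1 x.ofLp)

theorem inner_augment (x y : EuclideanSpace 𝕜 ι) :
    ⟪augment x, augment y⟫_𝕜 = 1 + ⟪x, y⟫_𝕜 := by
  simp [augment, PiLp.inner_apply, Fintype.sum_sum_type]

theorem norm_augment_sq (x : EuclideanSpace 𝕜 ι) : ‖augment x‖ ^ 2 = 1 + ‖x‖ ^ 2 := by
  simp [augment, EuclideanSpace.norm_sq_eq, Fintype.sum_sum_type]

theorem norm_augment_sq_mul_sub_le {x x' : EuclideanSpace 𝕜 ι} (h : ‖x‖ * ‖x'‖ ≤ 1) :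
    ‖augment x‖ ^ 2 * ‖augment x'‖ ^ 2 - ‖⟪augment x, augment x'⟫_𝕜‖ ^ 2 ≤ (‖x‖ + ‖x'‖) ^ 2 := by
  have hlow := one_sub_mul_le_norm_one_add_inner (𝕜 := 𝕜) x x'
  rw [norm_augment_sq, norm_augment_sq, inner_augment]
  nlinarith [pow_le_pow_left₀ (sub_nonneg.2 h) hlow 2]

theorem norm_inner_augment_mul_sub_le {x x' y y' : EuclideanSpace 𝕜 ι}
    (hx : ‖x‖ * ‖x'‖ ≤ 1) (hy : ‖y‖ * ‖y'‖ ≤ 1) :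
    ‖⟪augment x, augment y⟫_𝕜 * ⟪augment x', augment y'⟫_𝕜 -
        ⟪augment x, augment y'⟫_𝕜 * ⟪augment x', augment y⟫_𝕜‖ ≤
      (‖x‖ + ‖x'‖) * (‖y‖ + ‖y'‖) := by
  have hgram_nonneg : 0 ≤ ‖augment y‖ ^ 2 * ‖augment y'‖ ^ 2 - ‖⟪augment y, augment y'⟫_𝕜‖ ^ 2 := by
    rw [sub_nonneg, ← mul_pow]
    exact pow_le_pow_left₀ (norm_nonneg _) (norm_inner_le_norm _ _) 2
  refine (pow_le_pow_iff_left₀ (norm_nonneg _) (by positivity) two_ne_zero).1 ?_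
  calc _ ≤ _ := norm_inner_mul_inner_sub_sq_le _ _ _ _
    _ ≤ (‖x‖ + ‖x'‖) ^ 2 * (‖y‖ + ‖y'‖) ^ 2 :=
      mul_le_mul (norm_augment_sq_mul_sub_le hx) (norm_augment_sq_mul_sub_le hy) hgram_nonneg
        (sq_nonneg _)
    _ = _ := by ring

theorem norm_inner_augment_mul_sub_le_of_norm_lt {x x' y y' : EuclideanSpace 𝕜 ι} {r : ℝ}
    (hx : ‖x‖ < r) (hx' : ‖x'‖ < r) (hy : ‖y‖ < r) (hy' : ‖y'‖ < r) (hr : r < 1) :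
    ‖⟪augment x, augment y⟫_𝕜 * ⟪augment x', augment y'⟫_𝕜 -
        ⟪augment x, augment y'⟫_𝕜 * ⟪augment x', augment y⟫_𝕜‖ ≤
      4 * r ^ 2 / (1 - r ^ 2) ^ 2 *
        (‖⟪augment x, augment y⟫_𝕜‖ * ‖⟪augment x', augment y'⟫_𝕜‖) := by
  have mul_le_sq : ∀ {a b : EuclideanSpace 𝕜 ι}, ‖a‖ < r → ‖b‖ < r → ‖a‖ * ‖b‖ ≤ r ^ 2 :=
    fun ha hb => by rw [sq]; exact mul_le_mul ha.le hb.le (norm_nonneg _) ((norm_nonneg _).trans ha.le)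
  have hr0 : 0 ≤ r := (norm_nonneg x).trans hx.le
  have hr2 : r ^ 2 < 1 := by nlinarith
  have lower : ∀ {a b : EuclideanSpace 𝕜 ι}, ‖a‖ < r → ‖b‖ < r →
      1 - r ^ 2 ≤ ‖⟪augment a, augment b⟫_𝕜‖ := fun {a b} ha hb => by
    rw [inner_augment]
    linarith [one_sub_mul_le_norm_one_add_inner (𝕜 := 𝕜) a b, mul_le_sq ha hb]
  calc _ ≤ (‖x‖ + ‖x'‖) * (‖y‖ + ‖y'‖) :=
        norm_inner_augment_mul_sub_le ((mul_le_sq hx hx').trans hr2.le)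
          ((mul_le_sq hy hy').trans hr2.le)
    _ ≤ (r + r) * (r + r) := by gcongr
    _ = 4 * r ^ 2 / (1 - r ^ 2) ^ 2 * ((1 - r ^ 2) * (1 - r ^ 2)) := by
      field_simp [(sub_pos.2 hr2).ne']
      ring
    _ ≤ _ := by gcongr <;> first | exact lower hx hy | exact lower hx' hy'

end Augment

theorem srMat_eq_vecMulVec {m : ℕ} (x y : EuclideanSpace ℂ (Fin m)) :
    srMat m x y = vecMulVec (augment y).ofLp (star (augment x).ofLp) := by
  ext (_ | i) (_ | j) <;> simp [srMat, augment, vecMulVec_apply]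

theorem srSet_approx_submultiplicative_general (m : ℕ) (hm : 0 < m) (r : ℝ)
    (hr1 : r < 1) :
    ∀ A ∈ srSet m r, ∀ B ∈ srSet m r, ∀ γ ∈ spectrum ℂ (A * B),
      ∃ α ∈ spectrum ℂ A, ∃ β ∈ spectrum ℂ B,
        ‖γ - α * β‖ ≤
          4 * r ^ 2 / (1 - r ^ 2) ^ 2 *
            ((spectralRadius ℂ A).toReal * (spectralRadius ℂ B).toReal) := by
  rintro _ ⟨x, y, lam, hx, hy, rfl⟩ _ ⟨x', y', mu, hx', hy', rfl⟩ γ hγ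
  have : Nontrivial (Unit ⊕ Fin m) := ⟨_, _, (Sum.inl_ne_inr : Sum.inl () ≠ Sum.inr ⟨0, hm⟩)⟩
  simp only [srMat_eq_vecMulVec, ← smul_vecMulVec] at hγ ⊢
  obtain ⟨α, hα, β, hβ, hγαβ⟩ := exists_mem_spectrum_vecMulVec_norm_sub_mul_le _ _ _ _ hγ
  refine ⟨α, hα, β, hβ, hγαβ.trans ?_⟩
  simp only [spectralRadius_vecMulVec, ENNReal.coe_toReal, coe_nnnorm, smul_dotProduct,
    dotProduct_comm (star _), ← EuclideanSpace.inner_eq_star_dotProduct, smul_eq_mul]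
  calc _ = ‖lam‖ * ‖mu‖ * ‖⟪augment x, augment y⟫_ℂ * ⟪augment x', augment y'⟫_ℂ -
        ⟪augment x, augment y'⟫_ℂ * ⟪augment x', augment y⟫_ℂ‖ := by
        rw [← norm_mul, ← norm_mul]; ring_nf
    _ ≤ ‖lam‖ * ‖mu‖ * (4 * r ^ 2 / (1 - r ^ 2) ^ 2 *
        (‖⟪augment x, augment y⟫_ℂ‖ * ‖⟪augment x', augment y'⟫_ℂ‖)) := by
        gcongr
        exact norm_inner_augment_mul_sub_le_of_norm_lt hx hx' hy hy' hr1
    _ = _ := by rw [norm_mul lam, norm_mul mu]; ring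

/-- `𝒮_r` is `(4r²/(1-r²)²)`-submultiplicative: for all `A, B ∈ 𝒮_r` and every
eigenvalue `γ` of `AB`, there exist eigenvalues `α` of `A` and `β` of `B` with
`|γ - αβ| ≤ (4r²/(1-r²)²)·ρ(A)·ρ(B)`, where `ρ` is the spectral radius. -/
theorem srSet_approx_submultiplicative (m : ℕ) (hm : 0 < m) (r : ℝ) (hr0 : 0 < r)
    (hr1 : r < 1) :
    ∀ A ∈ srSet m r, ∀ B ∈ srSet m r, ∀ γ ∈ spectrum ℂ (A * B),
      ∃ α ∈ spectrum ℂ A, ∃ β ∈ spectrum ℂ B,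
        ‖γ - α * β‖ ≤
          4 * r ^ 2 / (1 - r ^ 2) ^ 2 *
            ((spectralRadius ℂ A).toReal * (spectralRadius ℂ B).toReal) :=
  srSet_approx_submultiplicative_general m hm r hr1
end
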